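/- arXiv:2511.03492 — 3 statements merged into one kernel-verified Lean document; each statement's English description precedes it below -/
import Mathlib

section
/- If m(z) is the unique positive solution of 1/m = -z + p/(1 + φm) for z < 0, then its derivative satisfies m'(z) = m(z)²/(1 - (1 + z·m(z))²·φ/p). -/
/-- If m(z) is the unique positive solution of
1/m = -z + p/(1 + φm) for z < 0, and m is differentiable, then
m'(z) = m(z)²/(1 - (1 + z·m(z))²·φ/p). -/
theorem stmt2 (p phi : ℝ) (hp : 0 < p) (hp1 : p ≤ 1) (hphi : 0 < phi)
    (m : ℝ → ℝ)
    (hpos : ∀ z < 0, 0 < m z)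
    (hfix : ∀ z < 0, 1 / m z = -z + p / (1 + phi * m z))
    (z : ℝ) (hz : z < 0) (hdiff : DifferentiableAt ℝ m z) :
    deriv m z = (m z) ^ 2 / (1 - (1 + z * m z) ^ 2 * phi / p) := by
  have hMpos : 0 < m z := hpos z hz
  have hMne : m z ≠ 0 := ne_of_gt hMpos
  have h1pos : 0 < 1 + phi * m z := by positivity
  have h1ne : (1 + phi * m z) ≠ 0 := ne_of_gt h1pos
  have hE : p * m z = (1 + z * m z) * (1 + phi * m z) := by
    have h := hfix z hz
    field_simp at h
    linarith
  set d := deriv m z with hdd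
  have hd : HasDerivAt m d z := hdiff.hasDerivAt
  have heq : (fun w => 1 + phi * m w + w * m w + w * phi * (m w) ^ 2 - p * m w)
      =ᶠ[nhds z] (fun _ => (0 : ℝ)) := by
    filter_upwards [Iio_mem_nhds hz] with w hw
    have hw' : (w : ℝ) < 0 := hw
    have hmw : 0 < m w := hpos w hw'
    have hmwne : m w ≠ 0 := ne_of_gt hmw
    have h1w : 0 < 1 + phi * m w := by positivity
    have h1wne : (1 + phi * m w) ≠ 0 := ne_of_gt h1w
    have h := hfix w hw'
    field_simp at h
    nlinarith [h]
  have hg0 : HasDerivAt (fun w => 1 + phi * m w + w * m w + w * phi * (m w) ^ 2 - p * m w)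
      0 z := (hasDerivAt_const z (0 : ℝ)).congr_of_eventuallyEq heq
  have hg := ((((hasDerivAt_const z (1 : ℝ)).add (hd.const_mul phi)).add
      ((hasDerivAt_id z).mul hd)).add
      (((hasDerivAt_id z).mul_const phi).mul (hd.pow 2))).sub (hd.const_mul p)
  have hkey := hg.unique hg0
  simp only [id_eq] at hkey
  norm_num at hkey
  -- hkey is a linear equation in d
  have hA : 0 < 1 - z * phi * (m z) ^ 2 := by
    nlinarith [mul_pos (mul_pos (neg_pos.mpr hz) hphi) (pow_pos hMpos 2)]
  have hdA : d * (1 - z * phi * (m z) ^ 2) = (m z) ^ 2 * (1 + phi * m z) := by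
    linear_combination (-(m z)) * hkey - d * hE
  have hDen : 1 - (1 + z * m z) ^ 2 * phi / p
      = (1 - z * phi * (m z) ^ 2) / (1 + phi * m z) := by
    field_simp
    linear_combination (phi * (1 + z * m z)) * hE
  rw [hDen, eq_div_iff (by positivity : ((1 - z * phi * (m z) ^ 2) / (1 + phi * m z)) ≠ 0)]
  field_simp
  linarith [hdA]
end

section
/- Fix p ∈ (0,1) and α_min(p) := Φ⁻¹((1+p)/2). Among all measurable sets A ⊆ ℝ with Gaussian measure ∫_A φ(t)dt = p, the minimum of ∫_A t²·φ(t)dt equals p − 2·α_min(p)·φ(α_min(p)), attained (up to null sets) by A = [−α_min(p), α_min(p)]. -/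
/-!
Bathtub principle: among sets of prescribed weight `∫_A φ = p`, the integral of `t² φ` is
smallest on a sublevel set of `t²`, i.e. on the interval `[-α, α]` of weight `p`. Comparing any
such `A` with `I = [-α, α]`, the pieces `A \ I` and `I \ A` carry the same weight, and `t² ≥ α²`
on the first while `t² ≤ α²` on the second. The value on `I` comes from `(-t φ(t))' = (t² - 1) φ(t)`.
-/

open MeasureTheory

/-- Standard normal pdf. -/
noncomputable def gpdf (x : ℝ) : ℝ := (Real.sqrt (2 * Real.pi))⁻¹ * Real.exp (-x ^ 2 / 2)

/-- Standard normal cdf. -/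
noncomputable def gcdf (x : ℝ) : ℝ := ∫ t in Set.Iic x, gpdf t

open ProbabilityTheory Set

section Bathtub

variable {X : Type*} [MeasurableSpace X] {μ : Measure X} {f w : X → ℝ} {A I : Set X} {c : ℝ}

theorem setIntegral_mul_le_setIntegral_mul_of_sublevel (hA : MeasurableSet A)
    (hI : MeasurableSet I) (hw : Integrable w μ) (hfw : Integrable (fun x => f x * w x) μ)
    (hw_nonneg : ∀ x, 0 ≤ w x) (hf_le : ∀ x ∈ I, f x ≤ c) (hf_ge : ∀ x ∉ I, c ≤ f x)
    (hmass : ∫ x in A, w x ∂μ = ∫ x in I, w x ∂μ) :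
    ∫ x in I, f x * w x ∂μ ≤ ∫ x in A, f x * w x ∂μ := by
  have hsplit : ∀ (g : X → ℝ), Integrable g μ → ∀ (S : Set X) {T : Set X}, MeasurableSet T →
      ∫ x in S, g x ∂μ = ∫ x in S ∩ T, g x ∂μ + ∫ x in S \ T, g x ∂μ :=
    fun g hg S T hT => (integral_inter_add_sdiff hT hg.integrableOn).symm
  have htail : ∫ x in A \ I, w x ∂μ = ∫ x in I \ A, w x ∂μ := by
    have hA' := hsplit w hw A hI
    have hI' := hsplit w hw I hA
    rw [inter_comm] at hI'
    linarith
  have hout : c * ∫ x in A \ I, w x ∂μ ≤ ∫ x in A \ I, f x * w x ∂μ := by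
    rw [← integral_const_mul]
    exact setIntegral_mono_on (hw.integrableOn.const_mul c) hfw.integrableOn (hA.diff hI)
      fun x hx => mul_le_mul_of_nonneg_right (hf_ge x hx.2) (hw_nonneg x)
  have hin : ∫ x in I \ A, f x * w x ∂μ ≤ c * ∫ x in I \ A, w x ∂μ := by
    rw [← integral_const_mul]
    exact setIntegral_mono_on hfw.integrableOn (hw.integrableOn.const_mul c) (hI.diff hA)
      fun x hx => mul_le_mul_of_nonneg_right (hf_le x hx.1) (hw_nonneg x)
  have hA' := hsplit _ hfw A hI
  have hI' := hsplit _ hfw I hA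
  rw [inter_comm] at hI'
  rw [htail] at hout
  linarith

end Bathtub

lemma gpdf_eq_gaussianPDFReal : gpdf = gaussianPDFReal 0 1 := by
  ext x
  simp [gpdf, gaussianPDFReal]

lemma gpdf_pos (x : ℝ) : 0 < gpdf x := by
  unfold gpdf
  positivity

lemma gpdf_neg (x : ℝ) : gpdf (-x) = gpdf x := by
  simp [gpdf]

lemma integrable_gpdf : Integrable gpdf := by
  simpa [gpdf_eq_gaussianPDFReal] using integrable_gaussianPDFReal 0 1

lemma integral_gpdf : ∫ x, gpdf x = 1 := by
  simpa [gpdf_eq_gaussianPDFReal] using integral_gaussianPDFReal_eq_one 0 one_ne_zero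

lemma integrable_sq_mul_gpdf : Integrable fun x => x ^ 2 * gpdf x := by
  refine ((integrable_rpow_mul_exp_neg_mul_sq (by norm_num : (0 : ℝ) < 1 / 2)
    (by norm_num : (-1 : ℝ) < 2)).const_mul (Real.sqrt (2 * Real.pi))⁻¹).congr
    (ae_of_all _ fun x => ?_)
  simp only [gpdf, Real.rpow_two]
  ring_nf

lemma hasDerivAt_gpdf (t : ℝ) : HasDerivAt gpdf (-t * gpdf t) t := by
  have hexp : HasDerivAt (fun t : ℝ => Real.exp (-t ^ 2 / 2)) (Real.exp (-t ^ 2 / 2) * (-t)) t :=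
    (((hasDerivAt_pow 2 t).neg.div_const 2).congr_deriv (by push_cast; ring)).exp
  exact (hexp.const_mul _).congr_deriv (by unfold gpdf; ring)

lemma hasDerivAt_neg_mul_gpdf (t : ℝ) :
    HasDerivAt (fun t => -(t * gpdf t)) ((t ^ 2 - 1) * gpdf t) t :=
  (((hasDerivAt_id t).mul (hasDerivAt_gpdf t)).neg).congr_deriv (by simp only [id_eq]; ring)

lemma gcdf_neg (x : ℝ) : gcdf (-x) = 1 - gcdf x := by
  have hreflect : gcdf (-x) = ∫ t in Ioi x, gpdf t := by
    simpa [gcdf, gpdf_neg] using integral_comp_neg_Iic (-x) gpdf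
  have htotal : gcdf x + ∫ t in Ioi x, gpdf t = 1 :=
    integral_gpdf ▸ intervalIntegral.integral_Iic_add_Ioi integrable_gpdf.integrableOn
      integrable_gpdf.integrableOn
  linarith

lemma gcdf_zero : gcdf 0 = 1 / 2 := by
  linarith [neg_zero (G := ℝ) ▸ gcdf_neg 0]

lemma gcdf_mono : Monotone gcdf := fun _ _ hab =>
  setIntegral_mono_set integrable_gpdf.integrableOn (ae_of_all _ fun x => (gpdf_pos x).le)
    (Iic_subset_Iic.2 hab).eventuallyLE

lemma setIntegral_Icc_gpdf {α : ℝ} (hα : 0 ≤ α) :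
    ∫ t in Icc (-α) α, gpdf t = 2 * gcdf α - 1 := by
  have h := intervalIntegral.integral_Iic_sub_Iic (a := -α) (b := α)
    integrable_gpdf.integrableOn integrable_gpdf.integrableOn
  rw [intervalIntegral.integral_of_le (by linarith), ← integral_Icc_eq_integral_Ioc] at h
  rw [← h, ← gcdf, ← gcdf, gcdf_neg]
  ring

lemma setIntegral_Icc_sq_mul_gpdf {α : ℝ} (hα : 0 ≤ α) :
    ∫ t in Icc (-α) α, t ^ 2 * gpdf t = (∫ t in Icc (-α) α, gpdf t) - 2 * α * gpdf α := by
  have hint : IntervalIntegrable (fun t => (t ^ 2 - 1) * gpdf t) volume (-α) α :=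
    ((integrable_sq_mul_gpdf.sub integrable_gpdf).congr
      (ae_of_all _ fun x => by simp only [Pi.sub_apply]; ring)).intervalIntegrable
  have hftc := intervalIntegral.integral_eq_sub_of_hasDerivAt
    (fun t _ => hasDerivAt_neg_mul_gpdf t) hint
  rw [intervalIntegral.integral_of_le (by linarith), ← integral_Icc_eq_integral_Ioc,
    gpdf_neg] at hftc
  have hsub : ∫ t in Icc (-α) α, (t ^ 2 - 1) * gpdf t
      = (∫ t in Icc (-α) α, t ^ 2 * gpdf t) - ∫ t in Icc (-α) α, gpdf t := by
    rw [← integral_sub integrable_sq_mul_gpdf.integrableOn integrable_gpdf.integrableOn]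
    congr 1
    ext x
    ring
  linarith

lemma sq_le_sq_of_notMem_Icc {α x : ℝ} (hα : 0 ≤ α) (hx : x ∉ Icc (-α) α) : α ^ 2 ≤ x ^ 2 := by
  rw [mem_Icc, ← abs_le, not_le] at hx
  exact sq_le_sq.2 ((abs_of_nonneg hα).le.trans_lt hx).le

/-- Fix p ∈ (0,1) and α = Φ⁻¹((1+p)/2), i.e. Φ(α) = (1+p)/2.
Among all measurable A ⊆ ℝ with Gaussian measure ∫_A φ = p, the minimum of
∫_A t²φ(t)dt equals p − 2αφ(α), attained by A = [−α, α]. -/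
theorem stmt10 (p : ℝ) (hp : p ∈ Set.Ioo (0 : ℝ) 1) (α : ℝ)
    (hα : gcdf α = (1 + p) / 2) :
    (∀ A : Set ℝ, MeasurableSet A → (∫ t in A, gpdf t) = p →
        p - 2 * α * gpdf α ≤ ∫ t in A, t ^ 2 * gpdf t) ∧
      (∫ t in Set.Icc (-α) α, gpdf t) = p ∧
      (∫ t in Set.Icc (-α) α, t ^ 2 * gpdf t) = p - 2 * α * gpdf α := by
  have hα0 : 0 ≤ α := by
    by_contra! hneg
    linarith [hp.1, gcdf_zero ▸ hα ▸ gcdf_mono hneg.le]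
  have hmass : ∫ t in Icc (-α) α, gpdf t = p := by
    rw [setIntegral_Icc_gpdf hα0, hα]
    ring
  have hmoment : ∫ t in Icc (-α) α, t ^ 2 * gpdf t = p - 2 * α * gpdf α := by
    rw [setIntegral_Icc_sq_mul_gpdf hα0, hmass]
  refine ⟨fun A hA hAp => hmoment ▸ ?_, hmass, hmoment⟩
  exact setIntegral_mul_le_setIntegral_mul_of_sublevel hA measurableSet_Icc integrable_gpdf
    integrable_sq_mul_gpdf (fun x => (gpdf_pos x).le) (fun _ hx => sq_le_sq' hx.1 hx.2)
    (fun x => sq_le_sq_of_notMem_Icc hα0) (hAp.trans hmass.symm)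
end

section
/- Let φ ∈ (0,1), p ∈ (φ, 1], σ ≥ 0, and let m(z) be the unique positive solution of 1/m = −z + p/(1+φm) for z < 0. Then lim_{z→0⁻} m(z) = 1/(p−φ), and consequently lim_{λ→0⁺} of the variance term σ²·φ·(d/dz)[z·m(z)]|_{z=−λ} equals σ²·φ/(p−φ). -/
open Filter Topology

/-!
For `z ≤ 0` the fixed-point equation is the quadratic `φ z m² + (z - (p - φ)) m + 1 = 0`, whose
positive root is `2 / ((p - φ - z) + √((p - φ - z)² - 4 φ z))`. Since `p > φ`, the discriminant
at `z = 0` is `(p - φ)² > 0`, so this expression is smooth near `0`. Hence `m` and the derivative of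
`z ↦ z m(z)` extend continuously to `z = 0`, where both equal `1 / (p - φ)`.
-/

/-- The Stieltjes transform `(p - φ - z - √…) / (2 φ z)` with its numerator rationalized, which
removes the apparent singularity at `z = 0`. -/
noncomputable def stieltjesMP (phi p z : ℝ) : ℝ :=
  2 / (p - phi - z + √((p - phi - z) ^ 2 - 4 * phi * z))

theorem ContDiffAt.continuousAt_deriv {𝕜 F : Type*} [NontriviallyNormedField 𝕜]
    [NormedAddCommGroup F] [NormedSpace 𝕜 F] {f : 𝕜 → F} {x : 𝕜} {n : WithTop ℕ∞}
    (hf : ContDiffAt 𝕜 n f x) (hn : n ≠ 0) : ContinuousAt (deriv f) x :=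
  (hf.continuousAt_fderiv hn).clm_apply continuousAt_const

theorem eq_stieltjesMP_of_fixedPoint {phi p z m : ℝ} (hphi : 0 ≤ phi) (hz : z ≤ 0) (hm : 0 < m)
    (hfix : 1 / m = -z + p / (1 + phi * m)) : m = stieltjesMP phi p z := by
  have hquad : z * phi * m ^ 2 + (z - (p - phi)) * m + 1 = 0 := by
    have : 1 + phi * m ≠ 0 := by positivity
    field_simp at hfix
    linear_combination hfix
  have hq : 0 ≤ (p - phi - z) ^ 2 - 4 * phi * z := by nlinarith
  have hsq : √((p - phi - z) ^ 2 - 4 * phi * z) * m = 2 - (p - phi - z) * m := by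
    refine (sq_eq_sq₀ (by positivity) ?_).1 ?_
    · nlinarith [mul_nonneg (mul_nonneg (neg_nonneg.2 hz) hphi) (sq_nonneg m)]
    · rw [mul_pow, Real.sq_sqrt hq]; linear_combination -4 * hquad
  rw [stieltjesMP, eq_div_iff]
  · linear_combination hsq
  · intro h; nlinarith

theorem stieltjesMP_zero {phi p : ℝ} (h : phi < p) : stieltjesMP phi p 0 = 1 / (p - phi) := by
  have : 0 < p - phi := by linarith
  rw [stieltjesMP]
  simp only [sub_zero, mul_zero, Real.sqrt_sq this.le, one_div]
  field_simp
  ring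

theorem contDiffAt_stieltjesMP {phi p : ℝ} {n : WithTop ℕ∞} (h : phi < p) :
    ContDiffAt ℝ n (stieltjesMP phi p) 0 := by
  have : 0 < p - phi := by linarith
  unfold stieltjesMP
  refine contDiffAt_const.div (contDiffAt_const.sub contDiffAt_id |>.add ?_) ?_
  · exact ContDiffAt.sqrt (by fun_prop) (by simp only [sub_zero, mul_zero]; positivity)
  · simp only [sub_zero, mul_zero, Real.sqrt_sq this.le]; linarith

theorem stmt18_general (phi p σ : ℝ) (hphi : phi ∈ Set.Ioo (0 : ℝ) 1)
    (hp : phi < p)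
    (m : ℝ → ℝ)
    (hpos : ∀ z < 0, 0 < m z)
    (hfix : ∀ z < 0, 1 / m z = -z + p / (1 + phi * m z)) :
    Tendsto m (nhdsWithin 0 (Set.Iio 0)) (nhds (1 / (p - phi))) ∧
      Tendsto (fun z => σ ^ 2 * phi * deriv (fun w => w * m w) z)
        (nhdsWithin 0 (Set.Iio 0)) (nhds (σ ^ 2 * phi / (p - phi))) := by
  set F := stieltjesMP phi p
  have hmF : Set.EqOn m F (Set.Iio 0) := fun z hz =>
    eq_stieltjesMP_of_fixedPoint hphi.1.le (le_of_lt hz) (hpos z hz) (hfix z hz)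
  have hF : ContDiffAt ℝ 1 F 0 := contDiffAt_stieltjesMP hp
  have hG : ContDiffAt ℝ 1 (fun w => w * F w) 0 := contDiffAt_id.mul hF
  have hG_deriv : deriv (fun w => w * F w) 0 = 1 / (p - phi) := by
    rw [(hasDerivAt_id' 0 |>.fun_mul (hF.differentiableAt one_ne_zero).hasDerivAt).deriv]
    simp [F, stieltjesMP_zero hp]
  constructor
  · rw [← stieltjesMP_zero hp]
    exact hF.continuousAt.continuousWithinAt.tendsto.congr'
      (eventuallyEq_nhdsWithin_of_eqOn hmF).symm
  · have hderiv : Set.EqOn (deriv fun w => w * m w) (deriv fun w => w * F w) (Set.Iio 0) :=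
      Set.EqOn.deriv (fun z hz => by simp only [hmF hz]) isOpen_Iio
    have hlim := ((hG.continuousAt_deriv one_ne_zero).continuousWithinAt (s := Set.Iio 0)).tendsto
    rw [hG_deriv, ← tendsto_congr' (eventuallyEq_nhdsWithin_of_eqOn hderiv)] at hlim
    convert hlim.const_mul (σ ^ 2 * phi) using 2
    ring

/-- Let φ ∈ (0,1), p ∈ (φ, 1], σ ≥ 0, and m(z) the unique
positive solution of 1/m = −z + p/(1+φm) for z < 0. Then m(z) → 1/(p−φ) as
z → 0⁻, and the variance term σ²·φ·(d/dz)[z·m(z)] tends to σ²·φ/(p−φ). -/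
theorem stmt18 (phi p σ : ℝ) (hphi : phi ∈ Set.Ioo (0 : ℝ) 1)
    (hp : phi < p) (hp1 : p ≤ 1) (hσ : 0 ≤ σ)
    (m : ℝ → ℝ)
    (hpos : ∀ z < 0, 0 < m z)
    (hfix : ∀ z < 0, 1 / m z = -z + p / (1 + phi * m z)) :
    Tendsto m (nhdsWithin 0 (Set.Iio 0)) (nhds (1 / (p - phi))) ∧
      Tendsto (fun z => σ ^ 2 * phi * deriv (fun w => w * m w) z)
        (nhdsWithin 0 (Set.Iio 0)) (nhds (σ ^ 2 * phi / (p - phi))) :=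
  stmt18_general phi p σ hphi hp m hpos hfix
end
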